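/- arXiv:2010.11770 — 3 statements merged into one kernel-verified Lean document; each statement's English description precedes it below -/
import Mathlib

section
/- For every real number α with 0 < α < 1, the integral ∫₀^∞ α^{tanh(t/2)} e^{-t} dt is at most 2 / |log α|. -/
/-!
Since `tanh (t / 2) ≥ 1 - e^{-t/2}` and `α ≤ 1`, the integrand is dominated by
`α ^ (1 - e^{-t/2}) e^{-t/2}`, which has the explicit primitive `2 α ^ (1 - e^{-t/2}) / log α`;
so the integral is at most `2 (1 - α) / |log α|`.
-/

open Real MeasureTheory Filter Topology Set

@[fun_prop]
lemma Real.continuous_tanh : Continuous tanh := by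
  simp_rw [funext tanh_eq_sinh_div_cosh]
  exact continuous_sinh.div continuous_cosh fun x ↦ (cosh_pos x).ne'

lemma Real.one_sub_exp_neg_le_tanh (x : ℝ) : 1 - exp (-x) ≤ tanh x := by
  rw [tanh_eq_sinh_div_cosh, le_div_iff₀ (cosh_pos x), sinh_eq, cosh_eq]
  have : exp (-x) * exp x = 1 := by rw [← exp_add]; simp
  nlinarith [sq_nonneg (1 - exp (-x)), exp_pos x, exp_pos (-x)]

lemma rpow_tanh_half_mul_exp_neg_le {α t : ℝ} (hα : 0 < α) (hα1 : α ≤ 1) (ht : 0 ≤ t) :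
    α ^ tanh (t / 2) * exp (-t) ≤ α ^ (1 - exp (-(t / 2))) * exp (-(t / 2)) := by
  gcongr ?_ * ?_
  · exact rpow_le_rpow_of_exponent_ge hα hα1 (one_sub_exp_neg_le_tanh _)
  · exact exp_le_exp.2 (by linarith)

lemma hasDerivAt_rpow_one_sub_exp_neg_half {α : ℝ} (hα : 0 < α) (hα1 : α ≠ 1) (t : ℝ) :
    HasDerivAt (fun t ↦ 2 / log α * α ^ (1 - exp (-(t / 2))))
      (α ^ (1 - exp (-(t / 2))) * exp (-(t / 2))) t := by
  have hlog : log α ≠ 0 := log_ne_zero_of_pos_of_ne_one hα hα1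
  have h : HasDerivAt (fun t : ℝ ↦ -(t / 2)) (-(1 / 2)) t := by
    simpa using ((hasDerivAt_id t).div_const 2).fun_neg
  refine (((h.exp.const_sub 1).const_rpow hα).const_mul (2 / log α)).congr_deriv ?_
  field_simp

lemma tendsto_rpow_one_sub_exp_neg_half {α : ℝ} (hα : 0 < α) :
    Tendsto (fun t ↦ α ^ (1 - exp (-(t / 2)))) atTop (𝓝 α) := by
  have h : Tendsto (fun t : ℝ ↦ -(t / 2)) atTop atBot :=
    tendsto_neg_atTop_atBot.comp (tendsto_id.atTop_div_const two_pos)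
  simpa [Function.comp_def] using (continuous_const_rpow hα.ne').tendsto _ |>.comp
    ((tendsto_exp_atBot.comp h).const_sub 1)

lemma integrableOn_Ioi_rpow_one_sub_exp_neg_half {α : ℝ} (hα : 0 < α) (hα1 : α ≠ 1) :
    IntegrableOn (fun t ↦ α ^ (1 - exp (-(t / 2))) * exp (-(t / 2))) (Ioi 0) :=
  integrableOn_Ioi_deriv_of_nonneg' (fun t _ ↦ hasDerivAt_rpow_one_sub_exp_neg_half hα hα1 t)
    (fun t _ ↦ by positivity) ((tendsto_rpow_one_sub_exp_neg_half hα).const_mul _)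

lemma integral_Ioi_rpow_one_sub_exp_neg_half {α : ℝ} (hα : 0 < α) (hα1 : α ≠ 1) :
    ∫ t in Ioi (0 : ℝ), α ^ (1 - exp (-(t / 2))) * exp (-(t / 2)) = 2 * (α - 1) / log α := by
  rw [integral_Ioi_of_hasDerivAt_of_nonneg'
    (fun t _ ↦ hasDerivAt_rpow_one_sub_exp_neg_half hα hα1 t)
    (fun t _ ↦ by positivity) ((tendsto_rpow_one_sub_exp_neg_half hα).const_mul _)]
  simp only [neg_zero, zero_div, exp_zero, sub_self, rpow_zero]
  ring

theorem integral_rpow_tanh_le (α : ℝ) (h0 : 0 < α) (h1 : α < 1) :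
    ∫ t in Set.Ioi (0 : ℝ), α ^ (Real.tanh (t / 2)) * Real.exp (-t) ≤ 2 / |Real.log α| := by
  have hdom_int := integrableOn_Ioi_rpow_one_sub_exp_neg_half h0 h1.ne
  have hbound (t : ℝ) (ht : t ∈ Ioi 0) :
      α ^ tanh (t / 2) * exp (-t) ≤ α ^ (1 - exp (-(t / 2))) * exp (-(t / 2)) :=
    rpow_tanh_half_mul_exp_neg_le h0 h1.le (le_of_lt ht)
  have hint : IntegrableOn (fun t ↦ α ^ tanh (t / 2) * exp (-t)) (Ioi 0) := by
    refine hdom_int.mono' (Continuous.aestronglyMeasurable (by fun_prop (disch := positivity))) ?_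
    refine ae_restrict_of_forall_mem measurableSet_Ioi fun t ht ↦ ?_
    rw [norm_of_nonneg (by positivity)]
    exact hbound t ht
  calc _ ≤ ∫ t in Ioi (0 : ℝ), α ^ (1 - exp (-(t / 2))) * exp (-(t / 2)) :=
        setIntegral_mono_on hint hdom_int measurableSet_Ioi hbound
    _ = 2 * (1 - α) / |log α| := by
        rw [integral_Ioi_rpow_one_sub_exp_neg_half h0 h1.ne, abs_of_neg (log_neg h0 h1)]
        ring
    _ ≤ 2 / |log α| := by gcongr; linarith
end

section
/- Let Y be a finite set and let Π = {P₁, P₂, P₃, P₄} and Π' = {P₁', P₂', P₃', P₄'} be partitions of Y into four nonempty parts. Say Π and Π' are compatible if, after reordering, P₁ ⊇ P₂' ∪ P₃' ∪ P₄'. Then any collection of pairwise compatible four-partitions of Y, with |Y| ≥ 4, has cardinality at most max{0, |Y| − 3}. -/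
open Finset

private lemma exists_third' {α : Type*} [DecidableEq α] {S : Finset α} (h : 4 ≤ S.card)
    (A B : α) : ∃ R ∈ S, R ≠ A ∧ R ≠ B := by
  by_contra hc
  push_neg at hc
  have hsub : S ⊆ {A, B} := by
    intro R hR
    by_cases h1 : R = A
    · simp [h1]
    · simp [hc R hR h1]
  have h2 := Finset.card_le_card hsub
  have h3 : ({A, B} : Finset α).card ≤ 2 :=
    (Finset.card_insert_le _ _).trans (by simp)
  omega

private lemma no_shared' {Y : Type*} [DecidableEq Y] {Y₀ : Finset Y}
    {S S' : Finset (Finset Y)}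
    (hc4 : 4 ≤ S.card) (hne : ∀ P ∈ S, P.Nonempty)
    (hdisj : ∀ P ∈ S, ∀ Q ∈ S, P ≠ Q → Disjoint P Q) (hsub : ∀ P ∈ S, P ⊆ Y₀)
    (hc4' : 4 ≤ S'.card) (hne' : ∀ P ∈ S', P.Nonempty)
    (hdisj' : ∀ P ∈ S', ∀ Q ∈ S', P ≠ Q → Disjoint P Q) (hsub' : ∀ P ∈ S', P ⊆ Y₀)
    {P P' : Finset Y} (hP : P ∈ S) (hP' : P' ∈ S') (hPP' : Y₀ \ P' ⊆ P)
    {Q : Finset Y} (hQS : Q ∈ S) (hQS' : Q ∈ S') : False := by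
  by_cases hQP' : Q = P'
  · obtain ⟨R, hR, hRP, hRQ⟩ := exists_third' hc4 P Q
    obtain ⟨r, hr⟩ := hne R hR
    have hrP : r ∉ P := disjoint_left.mp (hdisj R hR P hP hRP) hr
    have hrQ : r ∉ Q := disjoint_left.mp (hdisj R hR Q hQS hRQ) hr
    have hrP' : r ∉ P' := by rw [← hQP']; exact hrQ
    exact hrP (hPP' (mem_sdiff.mpr ⟨hsub R hR hr, hrP'⟩))
  · have hQdP' : Disjoint Q P' := hdisj' Q hQS' P' hP' hQP'
    by_cases hQP : Q = P
    · obtain ⟨R, hR, hRP, hRQ⟩ := exists_third' hc4' P' Q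
      obtain ⟨r, hr⟩ := hne' R hR
      have hrP' : r ∉ P' := disjoint_left.mp (hdisj' R hR P' hP' hRP) hr
      have hrQ : r ∉ Q := disjoint_left.mp (hdisj' R hR Q hQS' hRQ) hr
      have hrP : r ∈ P := hPP' (mem_sdiff.mpr ⟨hsub' R hR hr, hrP'⟩)
      rw [← hQP] at hrP
      exact hrQ hrP
    · obtain ⟨q, hq⟩ := hne Q hQS
      have hqP' : q ∉ P' := disjoint_left.mp hQdP' hq
      have hqP : q ∈ P := hPP' (mem_sdiff.mpr ⟨hsub Q hQS hq, hqP'⟩)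
      exact disjoint_left.mp (hdisj Q hQS P hP hQP) hq hqP

private lemma four_aux {Y : Type*} [DecidableEq Y] :
    ∀ (n : ℕ) (Y₀ : Finset Y) (𝒞 : Finset (Finset (Finset Y))),
    𝒞.card ≤ n →
    (∀ S ∈ 𝒞, S.card = 4 ∧ (∀ P ∈ S, P.Nonempty) ∧
      (∀ P ∈ S, ∀ Q ∈ S, P ≠ Q → Disjoint P Q) ∧ (∀ y ∈ Y₀, ∃ P ∈ S, y ∈ P) ∧
      (∀ P ∈ S, P ⊆ Y₀)) →
    (∀ S ∈ 𝒞, ∀ S' ∈ 𝒞, S ≠ S' → ∃ P ∈ S, ∃ P' ∈ S', Y₀ \ P' ⊆ P) →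
    𝒞.card ≤ Y₀.card - 3 := by
  intro n
  induction n with
  | zero => intro Y₀ 𝒞 hn _ _; omega
  | succ n ih =>
    intro Y₀ 𝒞 hn hpart hcompat
    rcases 𝒞.eq_empty_or_nonempty with h0 | ⟨S₁, hS₁⟩
    · simp [h0]
    -- choose a part of minimal cardinality
    have h𝒫ne : (𝒞.biUnion id).Nonempty := by
      obtain ⟨hc4, _, _, _, _⟩ := hpart S₁ hS₁
      obtain ⟨P, hP⟩ : S₁.Nonempty := card_pos.mp (by omega)
      exact ⟨P, mem_biUnion.mpr ⟨S₁, hS₁, hP⟩⟩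
    obtain ⟨P₁, hP₁mem, hmin⟩ := (𝒞.biUnion id).exists_min_image card h𝒫ne
    obtain ⟨S₀, hS₀, hP₁S₀⟩ := mem_biUnion.mp hP₁mem
    obtain ⟨hc40, hne0, hdisj0, hcov0, hsub0⟩ := hpart S₀ hS₀
    have hP₁ne : P₁.Nonempty := hne0 P₁ hP₁S₀
    have hP₁sub : P₁ ⊆ Y₀ := hsub0 P₁ hP₁S₀
    have hP₁pos : 1 ≤ P₁.card := card_pos.mpr hP₁ne
    -- |Y₀| ≥ 4
    have hY4 : 4 ≤ Y₀.card := by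
      have hsubU : S₀.biUnion id ⊆ Y₀ := biUnion_subset.mpr hsub0
      have hcardU : (S₀.biUnion id).card = ∑ P ∈ S₀, P.card :=
        card_biUnion (fun P hP Q hQ h => hdisj0 P hP Q hQ h)
      have hsum : S₀.card ≤ ∑ P ∈ S₀, P.card := by
        calc S₀.card = ∑ _P ∈ S₀, 1 := by simp
        _ ≤ ∑ P ∈ S₀, P.card := sum_le_sum (fun P hP => card_pos.mpr (hne0 P hP))
      have hle := card_le_card hsubU
      omega
    -- no two distinct members of 𝒞 share a part
    have hnos : ∀ S ∈ 𝒞, ∀ S' ∈ 𝒞, S ≠ S' → ∀ Q ∈ S, Q ∉ S' := by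
      intro S hS S' hS' hne' Q hQ hQ'
      obtain ⟨P, hP, P', hP', hPP'⟩ := hcompat S hS S' hS' hne'
      obtain ⟨a4, an, ad, _, as⟩ := hpart S hS
      obtain ⟨b4, bn, bd, _, bs⟩ := hpart S' hS'
      exact no_shared' (by omega) an ad as (by omega) bn bd bs hP hP' hPP' hQ hQ'
    -- every other partition has a part containing P₁
    have hf : ∀ S ∈ 𝒞.erase S₀, ∃ f ∈ S, P₁ ⊆ f := by
      intro S hS
      have hSne : S₀ ≠ S := fun h => (mem_erase.mp hS).1 h.symm
      have hS𝒞 : S ∈ 𝒞 := (mem_erase.mp hS).2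
      obtain ⟨P, hP, P', hP', hPP'⟩ := hcompat S₀ hS₀ S hS𝒞 hSne
      obtain ⟨b4, bn, bd, _, bs⟩ := hpart S hS𝒞
      by_cases hPeq : P₁ = P
      · exfalso
        obtain ⟨R₁, hR₁, hR₁P', _⟩ := exists_third' (by omega : 4 ≤ S.card) P' P'
        obtain ⟨R₂, hR₂, hR₂P', hR₂R₁⟩ := exists_third' (by omega : 4 ≤ S.card) P' R₁
        have hsubP₁ : ∀ R ∈ S, R ≠ P' → R = P₁ := by
          intro R hR hRP'
          have hRsub : R ⊆ P₁ := by
            intro r hr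
            have hrP' : r ∉ P' := disjoint_left.mp (bd R hR P' hP' hRP') hr
            rw [hPeq]
            exact hPP' (mem_sdiff.mpr ⟨bs R hR hr, hrP'⟩)
          exact eq_of_subset_of_card_le hRsub (hmin R (mem_biUnion.mpr ⟨S, hS𝒞, hR⟩))
        have e1 := hsubP₁ R₁ hR₁ hR₁P'
        have e2 := hsubP₁ R₂ hR₂ hR₂P'
        exact hR₂R₁ (e2.trans e1.symm)
      · refine ⟨P', hP', fun x hx => ?_⟩
        have hxY : x ∈ Y₀ := hP₁sub hx
        have hxP : x ∉ P := disjoint_left.mp (hdisj0 P₁ hP₁S₀ P hP hPeq) hx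
        by_contra hxP'
        exact hxP (hPP' (mem_sdiff.mpr ⟨hxY, hxP'⟩))
    have hP₁notin : ∀ S ∈ 𝒞.erase S₀, P₁ ∉ S := by
      intro S hS
      exact hnos S₀ hS₀ S (mem_erase.mp hS).2 (fun h => (mem_erase.mp hS).1 h.symm)
        P₁ hP₁S₀
    have hnotsub : ∀ S ∈ 𝒞.erase S₀, ∀ Q ∈ S, ¬ Q ⊆ P₁ := by
      intro S hS Q hQ hQsub
      have hc := hmin Q (mem_biUnion.mpr ⟨S, (mem_erase.mp hS).2, hQ⟩)
      have : Q = P₁ := eq_of_subset_of_card_le hQsub hc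
      exact hP₁notin S hS (this ▸ hQ)
    have hQalt : ∀ S ∈ 𝒞.erase S₀, ∀ Q ∈ S, Disjoint Q P₁ ∨ P₁ ⊆ Q := by
      intro S hS Q hQ
      obtain ⟨f, hfS, hfP⟩ := hf S hS
      obtain ⟨a4, an, ad, ac, as⟩ := hpart S (mem_erase.mp hS).2
      by_cases hQf : Q = f
      · right; rw [hQf]; exact hfP
      · left; exact (ad Q hQ f hfS hQf).mono_right hfP
    have hsdne : ∀ S ∈ 𝒞.erase S₀, ∀ Q ∈ S, (Q \ P₁).Nonempty := by
      intro S hS Q hQ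
      exact sdiff_nonempty.mpr (hnotsub S hS Q hQ)
    -- the shrinking map
    set g : Finset (Finset Y) → Finset (Finset Y) :=
      fun S => S.image (fun Q => Q \ P₁) with hg
    have hinjQ : ∀ S ∈ 𝒞.erase S₀, Set.InjOn (fun Q => Q \ P₁) S := by
      intro S hS Q₁ h₁ Q₂ h₂ heq0
      have heq : Q₁ \ P₁ = Q₂ \ P₁ := heq0
      by_contra hne2
      obtain ⟨a4, an, ad, ac, as⟩ := hpart S (mem_erase.mp hS).2
      have hd : Disjoint Q₁ Q₂ := ad Q₁ h₁ Q₂ h₂ hne2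
      have hd' : Disjoint (Q₁ \ P₁) (Q₂ \ P₁) :=
        hd.mono sdiff_subset sdiff_subset
      rw [heq] at hd'
      have hempty : Q₂ \ P₁ = ∅ := disjoint_self.mp hd'
      exact (hsdne S hS Q₂ h₂).ne_empty hempty
    set 𝒞' : Finset (Finset (Finset Y)) := (𝒞.erase S₀).image g with h𝒞'
    have hpart' : ∀ T ∈ 𝒞', T.card = 4 ∧ (∀ P ∈ T, P.Nonempty) ∧
        (∀ P ∈ T, ∀ Q ∈ T, P ≠ Q → Disjoint P Q) ∧
        (∀ y ∈ Y₀ \ P₁, ∃ P ∈ T, y ∈ P) ∧ (∀ P ∈ T, P ⊆ Y₀ \ P₁) := by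
      intro T hT
      obtain ⟨S, hS, rfl⟩ := mem_image.mp hT
      obtain ⟨b4, bn, bd, bc, bs⟩ := hpart S (mem_erase.mp hS).2
      refine ⟨?_, ?_, ?_, ?_, ?_⟩
      · rw [hg]
        simpa [card_image_of_injOn (hinjQ S hS)] using b4
      · intro P hP
        obtain ⟨Q, hQ, rfl⟩ := mem_image.mp hP
        exact hsdne S hS Q hQ
      · intro P hP Q hQ hne2
        obtain ⟨Q₁, hQ₁, rfl⟩ := mem_image.mp hP
        obtain ⟨Q₂, hQ₂, rfl⟩ := mem_image.mp hQ
        have hne3 : Q₁ ≠ Q₂ := fun h => hne2 (by rw [h])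
        exact (bd Q₁ hQ₁ Q₂ hQ₂ hne3).mono sdiff_subset sdiff_subset
      · intro y hy
        obtain ⟨Q, hQ, hyQ⟩ := bc y (mem_sdiff.mp hy).1
        exact ⟨Q \ P₁, mem_image_of_mem _ hQ,
          mem_sdiff.mpr ⟨hyQ, (mem_sdiff.mp hy).2⟩⟩
      · intro P hP
        obtain ⟨Q, hQ, rfl⟩ := mem_image.mp hP
        exact sdiff_subset_sdiff (bs Q hQ) (Finset.Subset.refl _)
    have hginj : Set.InjOn g (𝒞.erase S₀) := by
      intro S hS T hT heq
      by_contra hST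
      have hS𝒞 : S ∈ 𝒞 := (mem_erase.mp hS).2
      have hT𝒞 : T ∈ 𝒞 := (mem_erase.mp hT).2
      obtain ⟨a4, an, ad, ac, as⟩ := hpart S hS𝒞
      obtain ⟨b4, bn, bd, bc, bs⟩ := hpart T hT𝒞
      obtain ⟨fS, hfS, hfSP⟩ := hf S hS
      obtain ⟨fT, hfT, hfTP⟩ := hf T hT
      obtain ⟨Q₁, hQ₁, hQ₁f, _⟩ := exists_third' (by omega : 4 ≤ S.card) fS fS
      obtain ⟨Q₂, hQ₂, hQ₂f, hQ₂₁⟩ := exists_third' (by omega : 4 ≤ S.card) fS Q₁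
      have key : ∀ Q ∈ S, Q ≠ fS → Q = fT \ P₁ := by
        intro Q hQ hQf
        have hQd : Disjoint Q P₁ := (ad Q hQ fS hfS hQf).mono_right hfSP
        have hQeq : Q \ P₁ = Q := Finset.sdiff_eq_self_iff_disjoint.mpr hQd
        have hQg : Q ∈ g T := by
          rw [← heq, hg]
          exact hQeq ▸ mem_image_of_mem _ hQ
        obtain ⟨Q', hQ', hQ'e0⟩ := mem_image.mp hQg
        have hQ'e : Q' \ P₁ = Q := hQ'e0
        rcases hQalt T hT Q' hQ' with hd | hs
        · have hQQ' : Q' = Q := by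
            rw [← hQ'e, Finset.sdiff_eq_self_iff_disjoint.mpr hd]
          exact absurd (hQQ' ▸ hQ') (hnos S hS𝒞 T hT𝒞 hST Q hQ)
        · have hQ'f : Q' = fT := by
            by_contra hne3
            obtain ⟨x, hx⟩ := hP₁ne
            exact disjoint_left.mp (bd Q' hQ' fT hfT hne3) (hs hx) (hfTP hx)
          rw [← hQ'e, hQ'f]
      have e1 := key Q₁ hQ₁ hQ₁f
      have e2 := key Q₂ hQ₂ hQ₂f
      exact hQ₂₁ (e2.trans e1.symm)
    have hcompat' : ∀ T ∈ 𝒞', ∀ T' ∈ 𝒞', T ≠ T' →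
        ∃ P ∈ T, ∃ P' ∈ T', (Y₀ \ P₁) \ P' ⊆ P := by
      intro T hT T' hT' hTT'
      obtain ⟨S, hS, rfl⟩ := mem_image.mp hT
      obtain ⟨S', hS', rfl⟩ := mem_image.mp hT'
      have hSS' : S ≠ S' := fun h => hTT' (by rw [h])
      obtain ⟨P, hP, P', hP', hPP'⟩ :=
        hcompat S (mem_erase.mp hS).2 S' (mem_erase.mp hS').2 hSS'
      refine ⟨P \ P₁, mem_image_of_mem _ hP, P' \ P₁, mem_image_of_mem _ hP', ?_⟩
      intro x hx
      rw [mem_sdiff, mem_sdiff] at hx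
      obtain ⟨⟨hxY, hxP₁⟩, hxP'⟩ := hx
      have hxnP' : x ∉ P' := fun h => hxP' (mem_sdiff.mpr ⟨h, hxP₁⟩)
      exact mem_sdiff.mpr ⟨hPP' (mem_sdiff.mpr ⟨hxY, hxnP'⟩), hxP₁⟩
    have hc1 : 1 ≤ 𝒞.card := card_pos.mpr ⟨S₁, hS₁⟩
    have hc' : 𝒞'.card = 𝒞.card - 1 := by
      rw [h𝒞', card_image_of_injOn hginj, card_erase_of_mem hS₀]
    have hn' : 𝒞'.card ≤ n := by omega
    have hres := ih (Y₀ \ P₁) 𝒞' hn' hpart' hcompat'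
    have hYd : (Y₀ \ P₁).card = Y₀.card - P₁.card := card_sdiff_of_subset hP₁sub
    have hP₁le : P₁.card ≤ Y₀.card := card_le_card hP₁sub
    omega

theorem compatible_four_partitions_card_le {Y : Type*} [Fintype Y] [DecidableEq Y]
    (h4 : 4 ≤ Fintype.card Y)
    (𝒞 : Finset (Finset (Finset Y)))
    (hpart : ∀ S ∈ 𝒞, S.card = 4 ∧ (∀ P ∈ S, P.Nonempty) ∧
      (∀ P ∈ S, ∀ Q ∈ S, P ≠ Q → Disjoint P Q) ∧ (∀ y : Y, ∃ P ∈ S, y ∈ P))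
    (hcompat : ∀ S ∈ 𝒞, ∀ S' ∈ 𝒞, S ≠ S' →
      ∃ P ∈ S, ∃ P' ∈ S', Finset.univ \ P' ⊆ P) :
    𝒞.card ≤ Fintype.card Y - 3 := by
  have h := four_aux 𝒞.card Finset.univ 𝒞 le_rfl
    (fun S hS => by
      obtain ⟨a, b, c, d⟩ := hpart S hS
      exact ⟨a, b, c, fun y _ => d y, fun P _ => subset_univ P⟩)
    hcompat
  simpa using h
end

section
/- Let μ be a probability measure on the plane ℝ² that is invariant under rotations about the origin. Suppose μ is supported on the annulus {a ≤ |x| ≤ b} with inner radius a = d₀ > 0. Then for every 0 < r ≤ d₀/100 and every x ∈ ℝ², μ(B(x,r)) < 100·r/d₀. Consequently, for all r > 0 there is a universal constant c > 0 such that sup_x μ(B(x,r)) ≤ c·r/d₀. -/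
/-!
A ball of radius `r ≤ d₀ / 100` that meets the support lies at distance at least `d₀ - r` from
the origin, so its rotations by the `N`-th roots of unity, `N = ⌊d₀ / (100 r)⌋ + 1`, are pairwise
disjoint: distinct `N`-th roots of unity are at distance at least `4 / N` (Jordan's inequality
`sin t ≥ 2t / π`). Rotation invariance gives all of them the same measure, so each has measure at
most `1 / N < 100 r / d₀`. For larger `r` the bound `c = 100` is trivial since `μ ≤ 1`.
-/

open Real Complex MeasureTheory Metric Function
open scoped ENNReal

theorem Real.mul_min_le_sin {t : ℝ} (h0 : 0 ≤ t) (hπ : t ≤ π) :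
    2 / π * min t (π - t) ≤ sin t := by
  rcases le_total t (π / 2) with h | h
  · exact (mul_le_mul_of_nonneg_left (min_le_left _ _) (by positivity)).trans (mul_le_sin h0 h)
  · calc 2 / π * min t (π - t) ≤ 2 / π * (π - t) :=
          mul_le_mul_of_nonneg_left (min_le_right _ _) (by positivity)
      _ ≤ sin (π - t) := mul_le_sin (by linarith) (by linarith)
      _ = sin t := sin_pi_sub t

theorem Complex.four_div_le_norm_exp_I_mul_ofReal_sub_one {N θ : ℝ} (hN : 0 < N)
    (h₁ : 2 * π / N ≤ θ) (h₂ : θ ≤ 2 * π - 2 * π / N) :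
    4 / N ≤ ‖exp (I * θ) - 1‖ := by
  have hπN : 2 * π / N = 2 * (π / N) := by ring
  have hπN_pos : 0 < π / N := by positivity
  have hmin : π / N ≤ min (θ / 2) (π - θ / 2) := le_min (by linarith) (by linarith)
  have hsin : 2 / N ≤ Real.sin (θ / 2) := calc
    2 / N = 2 / π * (π / N) := by field_simp
    _ ≤ 2 / π * min (θ / 2) (π - θ / 2) := by gcongr
    _ ≤ Real.sin (θ / 2) := Real.mul_min_le_sin (by linarith [pi_pos]) (by linarith)
  rw [norm_exp_I_mul_ofReal_sub_one, Real.norm_eq_abs, show (4 : ℝ) / N = 2 * (2 / N) by ring]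
  linarith [le_abs_self (2 * Real.sin (θ / 2))]

theorem Complex.norm_exp_I_mul_ofReal_sub_exp_I_mul_ofReal (a b : ℝ) :
    ‖exp (I * a) - exp (I * b)‖ = ‖exp (I * ↑(a - b)) - 1‖ := by
  rw [← one_mul ‖exp (I * ↑(a - b)) - 1‖, ← norm_exp_I_mul_ofReal b, ← norm_mul, mul_sub,
    ← Complex.exp_add, mul_one]
  congr 3
  push_cast; ring

theorem Complex.four_div_le_dist_exp_two_pi_I_mul_div {N : ℕ} {j k : Fin N} (hjk : k < j) :
    4 / N ≤ dist (exp (I * ↑(2 * π * j / N))) (exp (I * ↑(2 * π * k / N))) := by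
  have hN : (0 : ℝ) < N := by exact_mod_cast k.pos
  have hkj : (k : ℝ) + 1 ≤ j := by exact_mod_cast hjk
  have hjN : (j : ℝ) + 1 ≤ N := by exact_mod_cast j.isLt
  rw [dist_eq_norm, norm_exp_I_mul_ofReal_sub_exp_I_mul_ofReal]
  have h2π : 2 * π * j / N - 2 * π * k / N = 2 * π / N * (j - k) := by ring
  have hfull : 2 * π / N * N = 2 * π := by field_simp
  apply four_div_le_norm_exp_I_mul_ofReal_sub_one hN <;> rw [h2π]
  · exact le_mul_of_one_le_right (by positivity) (by linarith)
  · nlinarith [show 0 < 2 * π / N by positivity]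

theorem Isometry.measure_closedBall_apply_eq {X : Type*} [PseudoMetricSpace X]
    [MeasurableSpace X] [BorelSpace X] {μ : Measure X} {f : X → X}
    (hf : Isometry f) (hμ : μ.map f = μ) (x : X) (r : ℝ) :
    μ (closedBall (f x) r) = μ (closedBall x r) := by
  have hpres : MeasurePreserving f μ μ := ⟨hf.continuous.measurable, hμ⟩
  rw [← hpres.measure_preimage measurableSet_closedBall.nullMeasurableSet, hf.preimage_closedBall]

theorem Complex.isometry_mul_left {z : ℂ} (hz : ‖z‖ = 1) : Isometry (z * ·) :=
  Isometry.of_dist_eq fun a b => by simp only [dist_eq_norm, ← mul_sub, norm_mul, hz, one_mul]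

theorem Complex.natCast_mul_measure_closedBall_le_measure_univ {μ : Measure ℂ}
    (hrot : ∀ z : ℂ, ‖z‖ = 1 → μ.map (z * ·) = μ) {N : ℕ} {x : ℂ} {r : ℝ}
    (hr : 2 * r < 4 / N * ‖x‖) :
    N * μ (closedBall x r) ≤ μ Set.univ := by
  let ζ : Fin N → ℂ := fun k => exp (I * ↑(2 * π * k / N))
  have hζ : ∀ k, ‖ζ k‖ = 1 := fun k => norm_exp_I_mul_ofReal _
  have hdisj : Pairwise (Disjoint on fun k => closedBall (ζ k * x) r) := by
    have hfar {j k : Fin N} (hjk : k < j) :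
        Disjoint (closedBall (ζ j * x) r) (closedBall (ζ k * x) r) := by
      apply closedBall_disjoint_closedBall
      rw [dist_eq_norm, ← sub_mul, norm_mul, ← dist_eq_norm]
      have hchord := four_div_le_dist_exp_two_pi_I_mul_div hjk
      nlinarith [norm_nonneg x]
    intro j k hne
    rcases hne.lt_or_gt with h | h
    exacts [(hfar h).symm, hfar h]
  calc (N : ℝ≥0∞) * μ (closedBall x r) = ∑' k, μ (closedBall (ζ k * x) r) := by
        simp [tsum_fintype, (isometry_mul_left (hζ _)).measure_closedBall_apply_eq (hrot _ (hζ _))]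
    _ ≤ μ Set.univ :=
        tsum_measure_le_measure_univ (fun _ => measurableSet_closedBall.nullMeasurableSet)
          fun _ _ h => (hdisj h).aedisjoint

theorem Complex.measure_closedBall_lt_of_rotation_invariant {μ : Measure ℂ}
    [IsProbabilityMeasure μ] (hrot : ∀ z : ℂ, ‖z‖ = 1 → μ.map (z * ·) = μ) {d₀ r : ℝ}
    (hinner : μ {w | ‖w‖ < d₀} = 0) (hr : 0 < r) (hrd : r ≤ d₀ / 100) (x : ℂ) :
    μ (closedBall x r) < ENNReal.ofReal (100 * r / d₀) := by
  have hd₀ : 0 < d₀ := by linarith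
  have hbound_pos : 0 < 100 * r / d₀ := by positivity
  by_cases hx : ‖x‖ + r < d₀
  · have hsub : closedBall x r ⊆ {w | ‖w‖ < d₀} := fun w hw => by
      have htri := norm_le_norm_add_norm_sub' w x
      rw [mem_closedBall, dist_eq_norm] at hw
      exact (by linarith : ‖w‖ < d₀)
    rw [measure_mono_null hsub hinner]
    exact ENNReal.ofReal_pos.mpr hbound_pos
  set N : ℕ := ⌊d₀ / (100 * r)⌋₊ + 1
  have hN_gt : d₀ / (100 * r) < N := by push_cast [N]; exact Nat.lt_floor_add_one _
  have hN_le : (N : ℝ) ≤ d₀ / (100 * r) + 1 := by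
    push_cast [N]; linarith [Nat.floor_le (div_pos hd₀ (by positivity : (0 : ℝ) < 100 * r)).le]
  have hN_pos : (0 : ℝ) < N := by positivity
  have hfit : 2 * r < 4 / N * ‖x‖ := by
    rw [div_mul_eq_mul_div, lt_div_iff₀ hN_pos]
    have : 2 * r * (d₀ / (100 * r)) = d₀ / 50 := by field_simp; ring
    nlinarith
  have hN_mul : (N : ℝ≥0∞) * μ (closedBall x r) ≤ 1 :=
    (natCast_mul_measure_closedBall_le_measure_univ hrot hfit).trans_eq measure_univ
  calc μ (closedBall x r) ≤ (N : ℝ≥0∞)⁻¹ := ENNReal.le_inv_iff_mul_le.mpr (by rwa [mul_comm])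
    _ = ENNReal.ofReal (N : ℝ)⁻¹ := by rw [ENNReal.ofReal_inv_of_pos hN_pos, ENNReal.ofReal_natCast]
    _ < ENNReal.ofReal (100 * r / d₀) := by
        rw [ENNReal.ofReal_lt_ofReal_iff hbound_pos, inv_lt_comm₀ hN_pos hbound_pos, inv_div]
        exact hN_gt

theorem rotation_invariant_annulus_ball_bound :
    ∃ c : ℝ, 0 < c ∧
      ∀ (μ : Measure ℂ), IsProbabilityMeasure μ →
        ∀ d₀ b : ℝ, 0 < d₀ →
          (∀ z : ℂ, ‖z‖ = 1 → Measure.map (fun w => z * w) μ = μ) →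
          μ {w : ℂ | ‖w‖ < d₀ ∨ b < ‖w‖} = 0 →
          (∀ r : ℝ, 0 < r → r ≤ d₀ / 100 → ∀ x : ℂ,
              μ (Metric.closedBall x r) < ENNReal.ofReal (100 * r / d₀)) ∧
          (∀ r > (0 : ℝ), ∀ x : ℂ,
              μ (Metric.closedBall x r) ≤ ENNReal.ofReal (c * r / d₀)) := by
  refine ⟨100, by norm_num, fun μ _ d₀ _ hd₀ hrot hnull => ?_⟩
  have hinner : μ {w | ‖w‖ < d₀} = 0 := measure_mono_null (fun w hw => Or.inl hw) hnull
  have hsmall : ∀ r : ℝ, 0 < r → r ≤ d₀ / 100 → ∀ x : ℂ,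
      μ (closedBall x r) < ENNReal.ofReal (100 * r / d₀) := fun r hr hrd =>
    measure_closedBall_lt_of_rotation_invariant hrot hinner hr hrd
  refine ⟨hsmall, fun r hr x => ?_⟩
  rcases le_or_gt r (d₀ / 100) with hrd | hrd
  · exact (hsmall r hr hrd x).le
  · calc μ (closedBall x r) ≤ 1 := prob_le_one
      _ ≤ ENNReal.ofReal (100 * r / d₀) :=
          ENNReal.one_le_ofReal.mpr (by rw [le_div_iff₀ hd₀]; linarith)
end
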